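/- Let G be a connected graph whose complement has a connected component isomorphic to the complete graph K_n for some n ≥ 2. Then no vertex of that component is a basis forced vertex of G. -/

import Mathlib

/-!
The vertices of `C.supp` are pairwise non-adjacent in `G` and adjacent to every other vertex, so
any two of them are twins and the transposition exchanging them is an automorphism of `G`. Being
basis forced is invariant under automorphisms, so if one vertex of `C.supp` were basis forced, all
of them would lie in every metric basis `R`. But then any vertex `v` of `C.supp` can be removed
from `R`: the only pairs that `v` alone could resolve involve `v` itself, and these are resolved by
a second vertex `u` of `C.supp`, since `d(u, v) = 2` while `d(u, w) = 1` for `w ∉ C.supp`.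
-/

open SimpleGraph

def IsResolving {V : Type*} (G : SimpleGraph V) (R : Set V) : Prop :=
  ∀ x y : V, x ≠ y → ∃ r ∈ R, G.dist r x ≠ G.dist r y

noncomputable def metricDim {V : Type*} (G : SimpleGraph V) : ℕ :=
  sInf {n | ∃ R : Set V, IsResolving G R ∧ R.ncard = n}

def IsMetricBasis {V : Type*} (G : SimpleGraph V) (R : Set V) : Prop :=
  IsResolving G R ∧ R.ncard = metricDim G

def IsBasisForced {V : Type*} (G : SimpleGraph V) (v : V) : Prop :=
  ∀ R : Set V, IsMetricBasis G R → v ∈ R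

section

variable {V W : Type*} {G : SimpleGraph V} {H : SimpleGraph W}

theorem SimpleGraph.Hom.edist_map_le (f : G →g H) (u v : V) :
    H.edist (f u) (f v) ≤ G.edist u v := by
  by_cases hr : G.Reachable u v
  · obtain ⟨p, hp⟩ := hr.exists_walk_length_eq_edist
    rw [← hp, ← p.length_map f]
    exact edist_le _
  · rw [edist_eq_top_of_not_reachable hr]
    exact le_top

theorem SimpleGraph.Iso.dist_map (φ : G ≃g H) (u v : V) : H.dist (φ u) (φ v) = G.dist u v :=
  congrArg ENat.toNat <| le_antisymm (φ.toHom.edist_map_le u v)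
    (by simpa using φ.symm.toHom.edist_map_le (φ u) (φ v))

theorem IsResolving.univ (hG : G.Connected) : IsResolving G Set.univ :=
  fun x _ hxy => ⟨x, Set.mem_univ x, by rw [dist_self]; exact (hG.pos_dist_of_ne hxy).ne⟩

theorem IsResolving.image_iso {R : Set V} (hR : IsResolving G R) (φ : G ≃g H) :
    IsResolving H (φ '' R) := by
  intro x y hxy
  obtain ⟨r, hr, hd⟩ := hR (φ.symm x) (φ.symm y) (φ.symm.injective.ne hxy)
  refine ⟨φ r, Set.mem_image_of_mem φ hr, ?_⟩
  rwa [← φ.apply_symm_apply x, ← φ.apply_symm_apply y, φ.dist_map, φ.dist_map]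

theorem exists_isMetricBasis (hG : G.Connected) : ∃ R, IsMetricBasis G R :=
  Nat.sInf_mem (s := {n | ∃ R : Set V, IsResolving G R ∧ R.ncard = n})
    ⟨_, _, IsResolving.univ hG, rfl⟩

theorem IsMetricBasis.ncard_le {R R' : Set V} (hR : IsMetricBasis G R) (hR' : IsResolving G R') :
    R.ncard ≤ R'.ncard :=
  hR.2 ▸ Nat.sInf_le ⟨R', hR', rfl⟩

theorem IsMetricBasis.image_iso {R : Set V} (hR : IsMetricBasis G R) (φ : G ≃g G) :
    IsMetricBasis G (φ '' R) :=
  ⟨hR.1.image_iso φ, (Set.ncard_image_of_injective R φ.injective).trans hR.2⟩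

theorem IsBasisForced.apply_iso {v : V} (hv : IsBasisForced G v) (φ : G ≃g G) :
    IsBasisForced G (φ v) := by
  intro R hR
  obtain ⟨w, hw, rfl⟩ := hv _ (hR.image_iso φ.symm)
  simpa using hw

theorem SimpleGraph.isClique_of_iso_top {s : Set V} (φ : G.induce s ≃g (⊤ : SimpleGraph W)) :
    G.IsClique s := by
  intro x hx y hy hxy
  have hadj : (⊤ : SimpleGraph W).Adj (φ ⟨x, hx⟩) (φ ⟨y, hy⟩) :=
    φ.injective.ne (Subtype.coe_ne_coe.mp hxy)
  simpa using φ.map_adj_iff.mp hadj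

theorem Equiv.swap_apply_mem_iff [DecidableEq V] {S : Set V} {u v x : V} (hu : u ∈ S)
    (hv : v ∈ S) : Equiv.swap u v x ∈ S ↔ x ∈ S := by
  rw [Equiv.swap_apply_def]
  split_ifs with hxu hxv
  · simp [hxu, hu, hv]
  · simp [hxv, hu, hv]
  · rfl

-- Equivalently, `S` spans a clique of `Gᶜ` that is one of its connected components.
def IsJoinedIndepSet (G : SimpleGraph V) (S : Set V) : Prop :=
  ∀ x ∈ S, ∀ y, G.Adj x y ↔ y ∉ S

theorem isJoinedIndepSet_supp {C : Gᶜ.ConnectedComponent} (hC : Gᶜ.IsClique C.supp) :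
    IsJoinedIndepSet G C.supp := by
  intro x hx y
  refine ⟨fun hxy hy => (hC hx hy hxy.ne).2 hxy, fun hy => ?_⟩
  by_contra hxy
  have hne : x ≠ y := by rintro rfl; exact hy hx
  exact hy ((C.mem_supp_congr_adj ((G.compl_adj x y).mpr ⟨hne, hxy⟩)).mp hx)

namespace IsJoinedIndepSet

variable {S : Set V} {u v x y : V}

theorem adj_iff_of_mem_right (hS : IsJoinedIndepSet G S) (hy : y ∈ S) : G.Adj x y ↔ x ∉ S :=
  (G.adj_comm x y).trans (hS y hy x)

def swapIso [DecidableEq V] (hS : IsJoinedIndepSet G S) (hu : u ∈ S) (hv : v ∈ S) :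
    G ≃g G where
  toEquiv := Equiv.swap u v
  map_rel_iff' {a b} := by
    have hmem : ∀ w, Equiv.swap u v w ∈ S ↔ w ∈ S := fun _ => Equiv.swap_apply_mem_iff hu hv
    by_cases ha : a ∈ S
    · rw [hS _ ((hmem a).2 ha), hS a ha, hmem]
    by_cases hb : b ∈ S
    · rw [hS.adj_iff_of_mem_right ((hmem b).2 hb), hS.adj_iff_of_mem_right hb, hmem]
    have hfix : ∀ w ∉ S, Equiv.swap u v w = w := fun w hw =>
      Equiv.swap_apply_of_ne_of_ne (ne_of_mem_of_not_mem hu hw).symm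
        (ne_of_mem_of_not_mem hv hw).symm
    simp only [hfix a ha, hfix b hb]

@[simp]
theorem swapIso_apply [DecidableEq V] (hS : IsJoinedIndepSet G S) (hu : u ∈ S) (hv : v ∈ S)
    (x : V) : hS.swapIso hu hv x = Equiv.swap u v x :=
  rfl

theorem dist_eq_one (hS : IsJoinedIndepSet G S) (hx : x ∈ S) (hy : y ∉ S) : G.dist x y = 1 :=
  dist_eq_one_iff_adj.mpr ((hS x hx y).mpr hy)

theorem dist_eq_two (hS : IsJoinedIndepSet G S) (hG : G.Connected) (hx : x ∈ S) (hy : y ∈ S)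
    (hxy : x ≠ y) : G.dist x y = 2 := by
  obtain ⟨z, hxz⟩ : ∃ z, G.Adj x z := by
    obtain ⟨p⟩ := hG.preconnected x y
    cases p with
    | nil => exact absurd rfl hxy
    | cons h _ => exact ⟨_, h⟩
  have hz : z ∉ S := (hS x hx z).mp hxz
  have hle : G.dist x y ≤ 2 := dist_le (.cons hxz ((hS y hy z).mpr hz).symm.toWalk)
  have hne_one : G.dist x y ≠ 1 := fun h => (hS x hx y).mp (dist_eq_one_iff_adj.mp h) hy
  have hpos : 0 < G.dist x y := hG.pos_dist_of_ne hxy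
  omega

theorem isResolving_sdiff_singleton (hS : IsJoinedIndepSet G S) (hG : G.Connected) {R : Set V}
    (hR : IsResolving G R) (hSR : S ⊆ R) (hu : u ∈ S) (hv : v ∈ S) (huv : u ≠ v) :
    IsResolving G (R \ {v}) := by
  intro x y hxy
  by_cases hx : x ∈ R \ {v}
  · exact ⟨x, hx, by rw [dist_self]; exact (hG.pos_dist_of_ne hxy).ne⟩
  by_cases hy : y ∈ R \ {v}
  · exact ⟨y, hy, by rw [dist_self]; exact (hG.pos_dist_of_ne hxy.symm).ne'⟩
  have hout : ∀ w ∉ R \ {v}, w ∈ S → w = v := fun w hw hwS => by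
    by_contra hwv
    exact hw ⟨hSR hwS, hwv⟩
  have hu' : u ∈ R \ {v} := ⟨hSR hu, huv⟩
  by_cases hxS : x ∈ S
  · obtain rfl := hout x hx hxS
    have hyS : y ∉ S := fun h => hxy (hout y hy h).symm
    exact ⟨u, hu', by rw [hS.dist_eq_two hG hu hxS huv, hS.dist_eq_one hu hyS]; omega⟩
  by_cases hyS : y ∈ S
  · obtain rfl := hout y hy hyS
    exact ⟨u, hu', by rw [hS.dist_eq_one hu hxS, hS.dist_eq_two hG hu hyS huv]; omega⟩
  -- `v` is at distance 1 from every vertex outside `S`, so it does not resolve `x` and `y`.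
  obtain ⟨r, hr, hd⟩ := hR x y hxy
  refine ⟨r, ⟨hr, ?_⟩, hd⟩
  rintro (rfl : r = v)
  exact hd (by rw [hS.dist_eq_one hv hxS, hS.dist_eq_one hv hyS])

end IsJoinedIndepSet

end

theorem stmt11 {V : Type*} [Fintype V] (G : SimpleGraph V) (hG : G.Connected)
    (C : Gᶜ.ConnectedComponent) (n : ℕ) (hn : 2 ≤ n)
    (hiso : Nonempty ((Gᶜ.induce C.supp) ≃g (⊤ : SimpleGraph (Fin n)))) :
    ∀ v ∈ C.supp, ¬ IsBasisForced G v := by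
  classical
  obtain ⟨φ⟩ := hiso
  have hS : IsJoinedIndepSet G C.supp := isJoinedIndepSet_supp (isClique_of_iso_top φ)
  intro v hv hforced
  have : Nontrivial (Fin n) := Fin.nontrivial_iff_two_le.mpr hn
  have : Nontrivial C.supp := φ.toEquiv.nontrivial
  obtain ⟨⟨u, hu⟩, huv⟩ := exists_ne (⟨v, hv⟩ : C.supp)
  obtain ⟨R, hR⟩ := exists_isMetricBasis hG
  have hSR : C.supp ⊆ R := fun w hw => by
    simpa using hforced.apply_iso (hS.swapIso hw hv) R hR
  have hR' := hS.isResolving_sdiff_singleton hG hR.1 hSR hu hv (by simpa using huv)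
  exact (hR.ncard_le hR').not_gt (Set.ncard_sdiff_singleton_lt_of_mem (hSR hv))
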